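/- arXiv:1003.1560 — 3 statements merged into one kernel-verified Lean document; each statement's English description precedes it below -/
import Mathlib

section
/- Let M be a symmetric n × n matrix over GF(2) with M₁₁ = 0, written in block form with first row (0, 𝟏, 𝟎) where the 𝟏 block corresponds to columns indexed by the neighbors of index 1 (entries M₁ⱼ = 1) and 𝟎 to the rest. Let M' be obtained from M by toggling every entry of the block M₁₁ corresponding to pairs of neighbors of index 1 (i.e., adding the rank-one matrix that is all ones on the neighbor block). Then M and M' have the same nullity over GF(2). -/
/-!
Since `M₁₁ = 0`, the first row of `M` is the indicator vector `u` of the neighbor block, so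
`M' = M + u uᵀ = M + u · (row 1 of M)`: toggling the neighbor block is the row operation adding
row 1 to every neighbor row. That operation is left multiplication by `1 + u e₁ᵀ`, which is
invertible because `(u e₁ᵀ)² = u₁ · u e₁ᵀ = 0`.
-/

/-- The GF(2)-nullity of a square matrix: the dimension of its kernel,
computed by rank–nullity. -/
noncomputable def nullity {n : Type} [Fintype n] (M : Matrix n n (ZMod 2)) : ℕ :=
  Fintype.card n - M.rank

namespace Matrix

variable {m n R : Type*} [Fintype m] [Fintype n] [DecidableEq m] [CommRing R]

theorem rank_add_vecMulVec_row (M : Matrix m n R) (i : m) (u : m → R) (hu : u i = 0) :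
    (M + vecMulVec u (M i)).rank = M.rank := by
  have hsq : vecMulVec u (Pi.single i 1) * vecMulVec u (Pi.single i 1) = 0 := by
    simp [vecMulVec_mul_vecMulVec, single_dotProduct, hu]
  have hunit : IsUnit (1 + vecMulVec u (Pi.single i (1 : R))) :=
    IsNilpotent.isUnit_one_add ⟨2, by rw [pow_two, hsq]⟩
  have hrowop : M + vecMulVec u (M i) = (1 + vecMulVec u (Pi.single i 1)) * M := by
    rw [Matrix.add_mul, Matrix.one_mul, vecMulVec_mul, single_one_vecMul, row]
  rw [hrowop, rank_mul_eq_right_of_isUnit_det _ _ ((isUnit_iff_isUnit_det _).mp hunit)]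

end Matrix

open Matrix

theorem nullity_toggle_neighbor_block_general {α β : Type} [Fintype α] [Fintype β]
    (M M' : Matrix (Unit ⊕ α ⊕ β) (Unit ⊕ α ⊕ β) (ZMod 2))
    (h00 : M (Sum.inl ()) (Sum.inl ()) = 0)
    (h0a : ∀ a, M (Sum.inl ()) (Sum.inr (Sum.inl a)) = 1)
    (h0b : ∀ b, M (Sum.inl ()) (Sum.inr (Sum.inr b)) = 0)
    (hAA : ∀ a a', M' (Sum.inr (Sum.inl a)) (Sum.inr (Sum.inl a')) =
      M (Sum.inr (Sum.inl a)) (Sum.inr (Sum.inl a')) + 1)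
    (hrest : ∀ i j, ((∀ a, i ≠ Sum.inr (Sum.inl a)) ∨ (∀ a, j ≠ Sum.inr (Sum.inl a))) →
      M' i j = M i j) :
    nullity M = nullity M' := by
  classical
  set u := M (Sum.inl ())
  have hu : ∀ k, (∀ a, k ≠ Sum.inr (Sum.inl a)) → u k = 0 := by
    rintro (⟨⟩ | a | b) hk
    exacts [h00, absurd rfl (hk a), h0b b]
  have htoggle : M' = M + vecMulVec u u := by
    ext i j
    by_cases hij : (∀ a, i ≠ Sum.inr (Sum.inl a)) ∨ (∀ a, j ≠ Sum.inr (Sum.inl a))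
    · rcases hij with hi | hj
      · simp [hrest i j (.inl hi), vecMulVec_apply, hu i hi]
      · simp [hrest i j (.inr hj), vecMulVec_apply, hu j hj]
    · simp only [not_or, not_forall, not_not] at hij
      obtain ⟨⟨a, rfl⟩, ⟨a', rfl⟩⟩ := hij
      simp [hAA, vecMulVec_apply, u, h0a]
  rw [nullity, nullity, htoggle, rank_add_vecMulVec_row M (Sum.inl ()) u h00]

/-- let `M` be symmetric over GF(2) with first diagonal entry 0,
whose first row is 1 exactly on a "neighbor" block (indexed by `α`) and 0 on
the rest (indexed by `β`).  Toggling every entry of the neighbor-neighbor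
block does not change the nullity. -/
theorem nullity_toggle_neighbor_block {α β : Type} [Fintype α] [Fintype β]
    (M M' : Matrix (Unit ⊕ α ⊕ β) (Unit ⊕ α ⊕ β) (ZMod 2))
    (hM : M.IsSymm) (hM' : M'.IsSymm)
    (h00 : M (Sum.inl ()) (Sum.inl ()) = 0)
    (h0a : ∀ a, M (Sum.inl ()) (Sum.inr (Sum.inl a)) = 1)
    (h0b : ∀ b, M (Sum.inl ()) (Sum.inr (Sum.inr b)) = 0)
    (hAA : ∀ a a', M' (Sum.inr (Sum.inl a)) (Sum.inr (Sum.inl a')) =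
      M (Sum.inr (Sum.inl a)) (Sum.inr (Sum.inl a')) + 1)
    (hrest : ∀ i j, ((∀ a, i ≠ Sum.inr (Sum.inl a)) ∨ (∀ a, j ≠ Sum.inr (Sum.inl a))) →
      M' i j = M i j) :
    nullity M = nullity M' :=
  nullity_toggle_neighbor_block_general M M' h00 h0a h0b hAA hrest
end

section
/- Let M be a symmetric matrix over GF(2) in block form [[A,B],[Bᵀ,C]]. Let M' be the larger symmetric matrix [[1,𝟏,𝟎],[𝟏,Ā,B],[𝟎,Bᵀ,C]], where 𝟏 denotes an all-ones row/column against the first block, 𝟎 all zeros against the second block, and Ā is A with every entry toggled. Then ν(M) = ν(M'), where ν denotes GF(2)-nullity. -/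
theorem Submodule.finrank_prod {K V W : Type*} [DivisionRing K] [AddCommGroup V] [Module K V]
    [AddCommGroup W] [Module K W] [FiniteDimensional K V] [FiniteDimensional K W]
    (p : Submodule K V) (q : Submodule K W) :
    Module.finrank K (p.prod q) = Module.finrank K p + Module.finrank K q := by
  have h := LinearMap.finrank_range_of_inj (f := p.subtype.prodMap q.subtype)
    (Prod.map_injective.2 ⟨p.injective_subtype, q.injective_subtype⟩)
  rwa [LinearMap.range_prodMap, Submodule.range_subtype, Submodule.range_subtype,
    Module.finrank_prod] at h

namespace Matrix

variable {K : Type*} [Field K] {l m n o : Type*} [Fintype m] [Fintype o]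

theorem mulVecLin_fromBlocks_zero_zero (A : Matrix l m K) (D : Matrix n o K) :
    (fromBlocks A 0 0 D).mulVecLin =
      (LinearEquiv.sumArrowLequivProdArrow l n K K).symm.toLinearMap ∘ₗ
        A.mulVecLin.prodMap D.mulVecLin ∘ₗ
          (LinearEquiv.sumArrowLequivProdArrow m o K K).toLinearMap := by
  ext v i
  rcases i with i | i <;> simp [fromBlocks_mulVec] <;> rfl

theorem rank_fromBlocks_zero_zero [Fintype l] [Fintype n] (A : Matrix l m K)
    (D : Matrix n o K) : (fromBlocks A 0 0 D).rank = A.rank + D.rank := by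
  rw [rank, mulVecLin_fromBlocks_zero_zero, LinearMap.range_comp, LinearEquiv.finrank_map_eq,
    LinearMap.range_comp_of_range_eq_top _ (LinearEquiv.range _),
    LinearMap.range_prodMap, Submodule.finrank_prod]
  rfl

variable [Fintype n] [DecidableEq n]

theorem fromBlocks_one_vecMulVec_add_eq (c : n → K) (M : Matrix n n K) :
    fromBlocks (1 : Matrix Unit Unit K) (replicateRow Unit c) (replicateCol Unit c)
        (vecMulVec c c + M) =
      fromBlocks 1 0 (replicateCol Unit c) 1 * fromBlocks 1 0 0 M *
        (fromBlocks 1 0 (replicateCol Unit c) 1)ᵀ := by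
  simp [fromBlocks_multiply, fromBlocks_transpose, vecMulVec_eq Unit]

theorem rank_fromBlocks_one_vecMulVec_add (c : n → K) (M : Matrix n n K) :
    (fromBlocks (1 : Matrix Unit Unit K) (replicateRow Unit c) (replicateCol Unit c)
        (vecMulVec c c + M)).rank = M.rank + 1 := by
  have hdet : IsUnit (fromBlocks (1 : Matrix Unit Unit K) 0 (replicateCol Unit c) 1).det := by
    simp
  rw [fromBlocks_one_vecMulVec_add_eq, rank_mul_eq_left_of_isUnit_det _ _
    (by rwa [det_transpose]), rank_mul_eq_right_of_isUnit_det _ _ hdet,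
    rank_fromBlocks_zero_zero, rank_one, Fintype.card_unit, add_comm]

end Matrix

open Matrix in
/-- for symmetric `M = [[A,B],[Bᵀ,C]]` over GF(2), the larger
symmetric matrix `M' = [[1,𝟏,𝟎],[𝟏,Ā,B],[𝟎,Bᵀ,C]]` (one extra index with
diagonal entry 1, adjacent to exactly the first block, on which the submatrix
is complemented) has the same nullity. -/
theorem nullity_augment_complement {α β : Type} [Fintype α] [Fintype β]
    (M : Matrix (α ⊕ β) (α ⊕ β) (ZMod 2)) (hM : M.IsSymm)
    (M' : Matrix (Unit ⊕ α ⊕ β) (Unit ⊕ α ⊕ β) (ZMod 2)) (hM' : M'.IsSymm)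
    (h00 : M' (Sum.inl ()) (Sum.inl ()) = 1)
    (h0a : ∀ a, M' (Sum.inl ()) (Sum.inr (Sum.inl a)) = 1)
    (h0b : ∀ b, M' (Sum.inl ()) (Sum.inr (Sum.inr b)) = 0)
    (hAA : ∀ a a', M' (Sum.inr (Sum.inl a)) (Sum.inr (Sum.inl a')) =
      M (Sum.inl a) (Sum.inl a') + 1)
    (hAB : ∀ a b, M' (Sum.inr (Sum.inl a)) (Sum.inr (Sum.inr b)) =
      M (Sum.inl a) (Sum.inr b))
    (hBB : ∀ b b', M' (Sum.inr (Sum.inr b)) (Sum.inr (Sum.inr b')) =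
      M (Sum.inr b) (Sum.inr b')) :
    nullity M = nullity M' := by
  classical
  have hA0 : ∀ a, M' (Sum.inr (Sum.inl a)) (Sum.inl ()) = 1 := fun a =>
    (hM'.apply _ _).trans (h0a a)
  have hB0 : ∀ b, M' (Sum.inr (Sum.inr b)) (Sum.inl ()) = 0 := fun b =>
    (hM'.apply _ _).trans (h0b b)
  have hBA : ∀ b a, M' (Sum.inr (Sum.inr b)) (Sum.inr (Sum.inl a)) =
      M (Sum.inr b) (Sum.inl a) := fun b a =>
    (hM'.apply _ _).trans ((hAB a b).trans (hM.apply _ _))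
  let c : α ⊕ β → ZMod 2 := Sum.elim 1 0
  have hM'_blocks : M' = fromBlocks 1 (replicateRow Unit c) (replicateCol Unit c)
      (vecMulVec c c + M) := by
    ext (⟨⟨⟩⟩ | a | b) (⟨⟨⟩⟩ | a' | b') <;>
      simp [c, vecMulVec_apply, h00, h0a, h0b, hA0, hB0, hAA, hAB, hBA, hBB, add_comm]
  have hrank : M'.rank = M.rank + 1 := hM'_blocks ▸ rank_fromBlocks_one_vecMulVec_add c M
  simp only [nullity, hrank, Fintype.card_sum, Fintype.card_unit]
  omega
end

section
/- Let M be symmetric over GF(2) of block form [[0,𝟏,𝟎],[𝟏,A,B],[𝟎,Bᵀ,C]] and let M' = [[1,0,𝟏,𝟎],[0,0,𝟏,𝟎],[𝟏,𝟏,A,B],[𝟎,𝟎,Bᵀ,C]]. Then ν(M) = ν(M'). -/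
lemma nullity_eq_finrank_ker {n : Type} [Fintype n] (M : Matrix n n (ZMod 2)) :
    nullity M = Module.finrank (ZMod 2) (LinearMap.ker M.mulVecLin) := by
  have h := LinearMap.finrank_range_add_finrank_ker M.mulVecLin
  rw [Module.finrank_pi] at h
  unfold nullity Matrix.rank
  omega

open Sum

namespace Matrix

variable {K n : Type*} [Field K]

structure IsLoopTwin (M' : Matrix (Unit ⊕ n) (Unit ⊕ n) K) (M : Matrix n n K) (i₀ : n) :
    Prop where
  loop_ne_zero : M' (inl ()) (inl ()) ≠ 0
  inr_inr : ∀ i j, M' (inr i) (inr j) = M i j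
  inl_inr : ∀ j, M' (inl ()) (inr j) = M i₀ j
  inr_inl : M' (inr i₀) (inl ()) = 0

namespace IsLoopTwin

variable [Fintype n] {M' : Matrix (Unit ⊕ n) (Unit ⊕ n) K} {M : Matrix n n K} {i₀ : n}

lemma mulVec_inr (h : IsLoopTwin M' M i₀) (v : Unit ⊕ n → K) (i : n) :
    (M' *ᵥ v) (inr i) = M' (inr i) (inl ()) * v (inl ()) + (M *ᵥ (v ∘ inr)) i := by
  simp [mulVec, dotProduct, Fintype.sum_sum_type, h.inr_inr]

lemma mulVec_inl (h : IsLoopTwin M' M i₀) (v : Unit ⊕ n → K) :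
    (M' *ᵥ v) (inl ()) = M' (inl ()) (inl ()) * v (inl ()) + (M *ᵥ (v ∘ inr)) i₀ := by
  simp [mulVec, dotProduct, Fintype.sum_sum_type, h.inl_inr]

lemma mulVec_eq_zero_iff (h : IsLoopTwin M' M i₀) (v : Unit ⊕ n → K) :
    M' *ᵥ v = 0 ↔ v (inl ()) = 0 ∧ M *ᵥ (v ∘ inr) = 0 := by
  constructor
  · intro hv
    have hi₀ : (M *ᵥ (v ∘ inr)) i₀ = 0 := by
      simpa [h.inr_inl] using (h.mulVec_inr v i₀).symm.trans (congrFun hv (inr i₀))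
    have hloop : v (inl ()) = 0 := by
      simpa [hi₀, h.loop_ne_zero] using (h.mulVec_inl v).symm.trans (congrFun hv (inl ()))
    refine ⟨hloop, funext fun i => ?_⟩
    simpa [hloop] using (h.mulVec_inr v i).symm.trans (congrFun hv (inr i))
  · rintro ⟨hloop, hv⟩
    ext (_ | i)
    · simp [h.mulVec_inl, hloop, hv]
    · simp [h.mulVec_inr, hloop, hv]

lemma ker_mulVecLin_eq_map (h : IsLoopTwin M' M i₀) :
    LinearMap.ker M'.mulVecLin =
      (LinearMap.ker M.mulVecLin).map (Function.ExtendByZero.linearMap K inr) := by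
  ext v
  simp only [LinearMap.mem_ker, mulVecLin_apply, Submodule.mem_map, h.mulVec_eq_zero_iff]
  constructor
  · rintro ⟨hloop, hv⟩
    refine ⟨v ∘ inr, hv, funext fun i => ?_⟩
    rcases i with _ | i
    · simp [Function.extend_apply', hloop]
    · simp [inr_injective.extend_apply]
  · rintro ⟨w, hw, rfl⟩
    simp [Function.extend_apply', inr_injective.extend_apply, Function.comp_def, hw]

lemma finrank_ker_mulVecLin (h : IsLoopTwin M' M i₀) :
    Module.finrank K (LinearMap.ker M'.mulVecLin) =
      Module.finrank K (LinearMap.ker M.mulVecLin) := by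
  have hinj : Function.Injective (Function.ExtendByZero.linearMap K (inr : n → Unit ⊕ n)) :=
    Function.extend_injective inr_injective (0 : Unit ⊕ n → K)
  rw [h.ker_mulVecLin_eq_map]
  exact (Submodule.equivMapOfInjective _ hinj _).finrank_eq.symm

end IsLoopTwin

end Matrix

theorem nullity_add_loop_twin_general {α β : Type} [Fintype α] [Fintype β]
    (M : Matrix (Unit ⊕ α ⊕ β) (Unit ⊕ α ⊕ β) (ZMod 2))
    (h00 : M (Sum.inl ()) (Sum.inl ()) = 0)
    (h0a : ∀ a, M (Sum.inl ()) (Sum.inr (Sum.inl a)) = 1)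
    (h0b : ∀ b, M (Sum.inl ()) (Sum.inr (Sum.inr b)) = 0)
    (M' : Matrix (Unit ⊕ Unit ⊕ α ⊕ β) (Unit ⊕ Unit ⊕ α ⊕ β) (ZMod 2))
    (hM' : M'.IsSymm)
    (h'00 : M' (Sum.inl ()) (Sum.inl ()) = 1)
    (h'01 : M' (Sum.inl ()) (Sum.inr (Sum.inl ())) = 0)
    (h'0a : ∀ a, M' (Sum.inl ()) (Sum.inr (Sum.inr (Sum.inl a))) = 1)
    (h'0b : ∀ b, M' (Sum.inl ()) (Sum.inr (Sum.inr (Sum.inr b))) = 0)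
    (h'in : ∀ i j, M' (Sum.inr i) (Sum.inr j) = M i j) :
    nullity M = nullity M' := by
  have twin : M'.IsLoopTwin M (inl ()) :=
    { loop_ne_zero := by simp [h'00]
      inr_inr := h'in
      inl_inr := by rintro (⟨⟩ | a | b) <;> simp [h'01, h'0a, h'0b, h00, h0a, h0b]
      inr_inl := by rw [hM'.apply, h'01] }
  rw [nullity_eq_finrank_ker, nullity_eq_finrank_ker, twin.finrank_ker_mulVecLin]

/-- for symmetric `M = [[0,𝟏,𝟎],[𝟏,A,B],[𝟎,Bᵀ,C]]` over GF(2),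
the matrix `M' = [[1,0,𝟏,𝟎],[0,0,𝟏,𝟎],[𝟏,𝟏,A,B],[𝟎,𝟎,Bᵀ,C]]` obtained by
adding one extra index with diagonal entry 1, not adjacent to the old first
index, and adjacent to exactly the same `α` block, has the same nullity. -/
theorem nullity_add_loop_twin {α β : Type} [Fintype α] [Fintype β]
    (M : Matrix (Unit ⊕ α ⊕ β) (Unit ⊕ α ⊕ β) (ZMod 2)) (hM : M.IsSymm)
    (h00 : M (Sum.inl ()) (Sum.inl ()) = 0)
    (h0a : ∀ a, M (Sum.inl ()) (Sum.inr (Sum.inl a)) = 1)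
    (h0b : ∀ b, M (Sum.inl ()) (Sum.inr (Sum.inr b)) = 0)
    (M' : Matrix (Unit ⊕ Unit ⊕ α ⊕ β) (Unit ⊕ Unit ⊕ α ⊕ β) (ZMod 2))
    (hM' : M'.IsSymm)
    (h'00 : M' (Sum.inl ()) (Sum.inl ()) = 1)
    (h'01 : M' (Sum.inl ()) (Sum.inr (Sum.inl ())) = 0)
    (h'0a : ∀ a, M' (Sum.inl ()) (Sum.inr (Sum.inr (Sum.inl a))) = 1)
    (h'0b : ∀ b, M' (Sum.inl ()) (Sum.inr (Sum.inr (Sum.inr b))) = 0)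
    (h'in : ∀ i j, M' (Sum.inr i) (Sum.inr j) = M i j) :
    nullity M = nullity M' :=
  nullity_add_loop_twin_general M h00 h0a h0b M' hM' h'00 h'01 h'0a h'0b h'in
end
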